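/- Let H be a complex Hilbert space, T a densely defined closed symmetric operator in H with adjoint T*, and let T̃ be a closed extension of T with T ⊆ T̃ ⊆ T*. Let λ₀ ∈ ℂ be a point of regular type for T. Then the map x ↦ T*x − λ₀x is a bijection from D(T̃) onto H if and only if D(T̃) and ker(T* − λ₀) are transversal in D(T*), i.e. D(T̃) ∩ ker(T* − λ₀) = {0} and D(T̃) + ker(T* − λ₀) = D(T*). -/

import Mathlib

/-! Symmetry gives `‖Tz − λ̄₀z‖ = ‖Tz − λ₀z‖`, so `T − λ̄₀` is bounded below. For `y ∈ H` the
functional `(T − λ̄₀)z ↦ ⟪y, z⟫` is then well defined and bounded on `ran(T − λ̄₀)`; a Hahn–Banach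
extension, represented by Riesz as `⟪x, ·⟫`, gives `x ∈ D(T*)` with `T*x − λ₀x = y`. So `T* − λ₀`
maps `D(T*)` onto `H` with kernel `ker(T* − λ₀)`, and a surjective linear map restricts to a
bijection on a subspace exactly when that subspace is a complement of its kernel. -/

noncomputable section

open Complex

variable {H : Type*} [NormedAddCommGroup H] [InnerProductSpace ℂ H] [CompleteSpace H]

/-- The subspace `ker(T* − λ) = {x ∈ D(T*) : T*x = λx}` of `H`, for a densely defined
operator `T`. -/
def defect (T : H →ₗ.[ℂ] H) (lam : ℂ) : Submodule ℂ H :=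
  Submodule.map T.adjoint.domain.subtype
    (LinearMap.ker (T.adjoint.toFun - lam • T.adjoint.domain.subtype))

theorem LinearMap.existsUnique_mem_and_apply_eq_iff {R V W : Type*} [Ring R] [AddCommGroup V]
    [AddCommGroup W] [Module R V] [Module R W] (L : V →ₗ[R] W) (hL : Function.Surjective L)
    (D : Submodule R V) :
    (∀ w, ∃! v, v ∈ D ∧ L v = w) ↔ D ⊓ LinearMap.ker L = ⊥ ∧ D ⊔ LinearMap.ker L = ⊤ := by
  have hbij : (∀ w, ∃! v, v ∈ D ∧ L v = w) ↔ Function.Bijective (L.domRestrict D) := by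
    simp only [Function.bijective_iff_existsUnique, ExistsUnique, Subtype.exists, Subtype.forall,
      LinearMap.domRestrict_apply, Subtype.mk.injEq, exists_prop, and_imp, and_assoc]
  rw [hbij, Function.Bijective, LinearMap.injective_domRestrict_iff, disjoint_iff,
    ← LinearMap.range_eq_top, LinearMap.range_domRestrict,
    LinearMap.map_eq_top_iff (LinearMap.range_eq_top.mpr hL)]

section

open scoped InnerProductSpace ComplexConjugate

variable {𝕜 E : Type*} [RCLike 𝕜] [NormedAddCommGroup E] [InnerProductSpace 𝕜 E]

theorem exists_inner_eq_of_norm_le [CompleteSpace E] {D : Type*} [AddCommGroup D] [Module 𝕜 D]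
    (A : D →ₗ[𝕜] E) (f : D →ₗ[𝕜] 𝕜) (C : ℝ) (hf : ∀ z, ‖f z‖ ≤ C * ‖A z‖) :
    ∃ x : E, ∀ z, ⟪x, A z⟫_𝕜 = f z := by
  have hker : LinearMap.ker A ≤ LinearMap.ker f := fun z hz => by
    simpa [LinearMap.mem_ker.mp hz] using hf z
  set ℓ : LinearMap.range A →ₗ[𝕜] 𝕜 :=
    (LinearMap.ker A).liftQ f hker ∘ₗ A.quotKerEquivRange.symm.toLinearMap
  have hℓ : ∀ z, ℓ ⟨A z, LinearMap.mem_range_self A z⟩ = f z := fun z => by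
    simp [ℓ, LinearMap.quotKerEquivRange_symm_apply_image]
  have hℓC : ∀ w, ‖ℓ w‖ ≤ C * ‖w‖ := by
    rintro ⟨_, z, rfl⟩
    simpa [hℓ] using hf z
  obtain ⟨g, hg, -⟩ := exists_extension_norm_eq _ (ℓ.mkContinuous C hℓC)
  refine ⟨(InnerProductSpace.toDual 𝕜 E).symm g, fun z => ?_⟩
  rw [InnerProductSpace.toDual_symm_apply]
  exact (hg ⟨A z, LinearMap.mem_range_self A z⟩).trans (hℓ z)

namespace LinearPMap

variable {T : E →ₗ.[𝕜] E}

theorem IsFormalAdjoint.norm_sub_conj_smul (hT : T.IsFormalAdjoint T) (μ : 𝕜) (z : T.domain) :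
    ‖T z - conj μ • (z : E)‖ = ‖T z - μ • (z : E)‖ := by
  have him : RCLike.im ⟪T z, (z : E)⟫_𝕜 = 0 :=
    RCLike.conj_eq_iff_im.mp (by rw [inner_conj_symm, hT z z])
  have hexpand : ∀ ν : 𝕜, ‖T z - ν • (z : E)‖ ^ 2
      = ‖T z‖ ^ 2 - 2 * (RCLike.re ν * RCLike.re ⟪T z, (z : E)⟫_𝕜) + ‖ν‖ ^ 2 * ‖(z : E)‖ ^ 2 :=
    fun ν => by
      rw [norm_sub_sq (𝕜 := 𝕜), inner_smul_right, RCLike.mul_re, him, norm_smul, mul_pow]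
      ring
  rw [← sq_eq_sq₀ (norm_nonneg _) (norm_nonneg _), hexpand, hexpand, RCLike.conj_re,
    RCLike.norm_conj]

theorem surjective_adjoint_sub_smul [CompleteSpace E] (hT : Dense (T.domain : Set E)) (μ : 𝕜)
    {c : ℝ} (hc : 0 < c) (hbound : ∀ z : T.domain, c * ‖(z : E)‖ ≤ ‖T z - conj μ • (z : E)‖) :
    Function.Surjective (T†.toFun - μ • T†.domain.subtype) := by
  intro y
  obtain ⟨x, hx⟩ := exists_inner_eq_of_norm_le (T.toFun - conj μ • T.domain.subtype)
    (innerₛₗ 𝕜 y ∘ₗ T.domain.subtype) (c⁻¹ * ‖y‖) fun z => by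
      calc ‖⟪y, (z : E)⟫_𝕜‖ ≤ ‖y‖ * ‖(z : E)‖ := norm_inner_le_norm _ _
        _ ≤ ‖y‖ * (c⁻¹ * ‖T z - conj μ • (z : E)‖) := by
          gcongr
          rw [le_inv_mul_iff₀ hc]
          exact hbound z
        _ = c⁻¹ * ‖y‖ * ‖T z - conj μ • (z : E)‖ := by ring
  have hw : ∀ z : T.domain, ⟪μ • x + y, z⟫_𝕜 = ⟪x, T z⟫_𝕜 := fun z => by
    have hAz : ⟪x, T z - conj μ • (z : E)⟫_𝕜 = ⟪y, (z : E)⟫_𝕜 := hx z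
    rw [inner_add_left, inner_smul_left, ← hAz, inner_sub_right, inner_smul_right]
    ring
  have hxd : x ∈ T†.domain := mem_adjoint_domain_of_exists x ⟨_, hw⟩
  refine ⟨⟨x, hxd⟩, ?_⟩
  show T† ⟨x, hxd⟩ - μ • x = y
  rw [adjoint_apply_eq hT ⟨x, hxd⟩ hw, add_sub_cancel_left]

end LinearPMap

end

theorem statement11_general (T : H →ₗ.[ℂ] H)
    (hdense : Dense (T.domain : Set H))
    (hsymm : ∀ x y : T.domain, (inner ℂ (T x) ((y : H)) : ℂ) = inner ℂ ((x : H)) (T y))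
    (Dt : Submodule ℂ H) (hDu : Dt ≤ T.adjoint.domain)
    (lam0 : ℂ)
    (hreg : ∃ c : ℝ, 0 < c ∧ ∀ x : T.domain, c * ‖(x : H)‖ ≤ ‖T x - lam0 • (x : H)‖) :
    (∀ y : H, ∃! x : T.adjoint.domain,
        (x : H) ∈ Dt ∧ T.adjoint x - lam0 • (x : H) = y) ↔
      (Dt ⊓ defect T lam0 = ⊥ ∧ Dt ⊔ defect T lam0 = T.adjoint.domain) := by
  obtain ⟨c, hc, hbound⟩ := hreg
  have hL := LinearPMap.surjective_adjoint_sub_smul hdense lam0 hc fun z => by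
    rw [LinearPMap.IsFormalAdjoint.norm_sub_conj_smul hsymm]
    exact hbound z
  set D' := Dt.comap T.adjoint.domain.subtype
  refine (LinearMap.existsUnique_mem_and_apply_eq_iff _ hL D').trans ?_
  have hmap : D'.map T.adjoint.domain.subtype = Dt := by
    rw [Submodule.map_comap_subtype, inf_of_le_right hDu]
  have hinj := Submodule.map_injective_of_injective T.adjoint.domain.injective_subtype
  rw [defect, ← hmap, ← Submodule.map_inf _ T.adjoint.domain.injective_subtype,
    ← Submodule.map_sup, hinj.eq_iff' (Submodule.map_bot _),
    hinj.eq_iff' (Submodule.map_subtype_top _)]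

/-- Let `T̃ = T*|_{D̃}` be a closed extension of a densely defined closed symmetric operator
`T` (so `D(T) ⊆ D̃ ⊆ D(T*)`), and let `λ₀` be a point of regular type for `T`.  Then
`x ↦ T*x − λ₀x` maps `D(T̃)` bijectively onto `H` iff `D̃` and `ker(T* − λ₀)` are
transversal in `D(T*)`: `D̃ ∩ ker(T* − λ₀) = {0}` and `D̃ + ker(T* − λ₀) = D(T*)`. -/
theorem statement11 (T : H →ₗ.[ℂ] H)
    (hdense : Dense (T.domain : Set H))
    (hclosed : IsClosed (T.graph : Set (H × H)))
    (hsymm : ∀ x y : T.domain, (inner ℂ (T x) ((y : H)) : ℂ) = inner ℂ ((x : H)) (T y))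
    (Dt : Submodule ℂ H) (hDl : T.domain ≤ Dt) (hDu : Dt ≤ T.adjoint.domain)
    (hTtClosed : IsClosed ((T.adjoint.domRestrict Dt).graph : Set (H × H)))
    (lam0 : ℂ)
    (hreg : ∃ c : ℝ, 0 < c ∧ ∀ x : T.domain, c * ‖(x : H)‖ ≤ ‖T x - lam0 • (x : H)‖) :
    (∀ y : H, ∃! x : T.adjoint.domain,
        (x : H) ∈ Dt ∧ T.adjoint x - lam0 • (x : H) = y) ↔
      (Dt ⊓ defect T lam0 = ⊥ ∧ Dt ⊔ defect T lam0 = T.adjoint.domain) :=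
  statement11_general T hdense hsymm Dt hDu lam0 hreg

end
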